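/- Let A be a finite d-regular λ-expander, f : A → {0,1} with |E_a[(−1)^{f(a)}]| ≤ √λ, and H : A → ℝ any function. Define ĥ_k(a) = E over k-step walks (a_1,…,a_k) from a of (−1)^{f(a_1)⊕⋯⊕f(a_k)}·H(a_k), ε̂_k = |E_a[ĥ_k]|, and σ̂_k² = E_a[ĥ_k²] − ε̂_k². Then for k ≥ 2: ε̂_k ≤ 2^{k−2}(λ^{(k−1)/2} ε̂_1 + λ^{k/2} σ̂_1) and σ̂_k ≤ 2^{k−2}(λ^{(k−2)/2} ε̂_1 + λ^{(k−1)/2} σ̂_1). -/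
import Mathlib


open Finset

noncomputable def expec {V : Type*} [Fintype V] (f : V → ℝ) : ℝ :=
  (∑ a, f a) / (Fintype.card V : ℝ)

noncomputable def sdev {V : Type*} [Fintype V] (f : V → ℝ) : ℝ :=
  Real.sqrt (expec (fun a => f a ^ 2) - (expec f) ^ 2)

noncomputable def edgeE {V : Type*} [Fintype V] {d : ℕ} (N : V → Fin d → V)
    (F : V → V → ℝ) : ℝ :=
  (∑ a, ∑ i, F a (N a i)) / ((Fintype.card V : ℝ) * d)

/-- `A` is a `lam`-expander in the mixing-lemma sense. -/
def IsExpander {V : Type*} [Fintype V] {d : ℕ} (N : V → Fin d → V) (lam : ℝ) : Prop :=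
  ∀ f g : V → ℝ,
    |edgeE N (fun a a' => f a * g a') - expec f * expec g| ≤ lam * sdev f * sdev g

/-- The graph given by the rotation map `N` is undirected (the edge multiset is symmetric). -/
def SymmGraph {V : Type*} [Fintype V] {d : ℕ} (N : V → Fin d → V) : Prop :=
  ∀ F : V → V → ℝ, (∑ a, ∑ i, F a (N a i)) = ∑ a, ∑ i, F (N a i) a
/-- $\hat h_k(a)$: expectation over k-step walks from a of the signed XOR times H at the endpoint. -/
noncomputable def hHat {V : Type*} {d : ℕ} (N : V → Fin d → V) (f : V → Bool) (H : V → ℝ) :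
    ℕ → V → ℝ
  | 0, a => H a
  | 1, a => (if f a then (-1 : ℝ) else 1) * H a
  | k + 2, a => (if f a then (-1 : ℝ) else 1) * ((∑ i, hHat N f H (k + 1) (N a i)) / d)

namespace Stmt5Aux

variable {V : Type*} [Fintype V] [Nonempty V] {d : ℕ}

lemma ncard_pos : (0:ℝ) < (Fintype.card V : ℝ) := by
  exact_mod_cast Fintype.card_pos

lemma sdev_nonneg' (g : V → ℝ) : 0 ≤ sdev g := Real.sqrt_nonneg _

lemma sq_expec_le (g : V → ℝ) : (expec g)^2 ≤ expec (fun a => g a ^ 2) := by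
  have hn : (0:ℝ) < (Fintype.card V : ℝ) := ncard_pos
  have h := sq_sum_le_card_mul_sum_sq (s := (Finset.univ : Finset V)) (f := g)
  simp only [Finset.card_univ] at h
  unfold expec
  rw [div_pow, div_le_div_iff₀ (by positivity) hn]
  calc (∑ a, g a)^2 * (Fintype.card V : ℝ)
      ≤ ((Fintype.card V : ℝ) * ∑ a, g a ^ 2) * (Fintype.card V : ℝ) := by
        apply mul_le_mul_of_nonneg_right h hn.le
    _ = (∑ a, g a ^ 2) * (Fintype.card V : ℝ)^2 := by ring

lemma var_nonneg (g : V → ℝ) : 0 ≤ expec (fun a => g a ^ 2) - (expec g)^2 := by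
  linarith [sq_expec_le g]

lemma sdev_sq (g : V → ℝ) : sdev g ^ 2 = expec (fun a => g a ^ 2) - (expec g)^2 :=
  Real.sq_sqrt (var_nonneg g)

lemma abs_expec_le_sqrt (g : V → ℝ) :
    |expec g| ≤ Real.sqrt (expec (fun a => g a ^ 2)) := by
  rw [← Real.sqrt_sq_eq_abs]
  exact Real.sqrt_le_sqrt (sq_expec_le g)

lemma sdev_le_sqrt (g : V → ℝ) :
    sdev g ≤ Real.sqrt (expec (fun a => g a ^ 2)) := by
  apply Real.sqrt_le_sqrt; nlinarith [sq_abs (expec g), sq_nonneg (expec g)]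

lemma expec_M (hd : 0 < d) (N : V → Fin d → V) (hsymm : SymmGraph N) (g : V → ℝ) :
    expec (fun a => (∑ i, g (N a i)) / d) = expec g := by
  have hd' : (0:ℝ) < d := by exact_mod_cast hd
  have h := hsymm (fun _ b => g b)
  unfold expec
  rw [← Finset.sum_div, h]
  simp only [Finset.sum_const, Finset.card_univ, Fintype.card_fin, nsmul_eq_mul]
  rw [← Finset.mul_sum]
  field_simp

lemma expec_sq_M_le (hd : 0 < d) (N : V → Fin d → V) (hsymm : SymmGraph N) (g : V → ℝ) :
    expec (fun a => ((∑ i, g (N a i)) / d)^2) ≤ expec (fun a => g a ^ 2) := by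
  have hd' : (0:ℝ) < d := by exact_mod_cast hd
  have hn : (0:ℝ) < (Fintype.card V : ℝ) := ncard_pos
  have key : ∀ a : V, ((∑ i, g (N a i)) / d)^2 ≤ (∑ i, g (N a i) ^ 2) / d := by
    intro a
    have h := sq_sum_le_card_mul_sum_sq (s := (Finset.univ : Finset (Fin d)))
      (f := fun i => g (N a i))
    simp only [Finset.card_univ, Fintype.card_fin] at h
    rw [div_pow, div_le_div_iff₀ (by positivity) hd']
    nlinarith
  have h2 : (∑ a, ∑ i, g (N a i) ^ 2) = (d : ℝ) * ∑ a, g a ^ 2 := by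
    have h := hsymm (fun _ b => g b ^ 2)
    rw [h]
    simp only [Finset.sum_const, Finset.card_univ, Fintype.card_fin, nsmul_eq_mul]
    rw [← Finset.mul_sum]
  unfold expec
  refine (div_le_div_iff_of_pos_right hn).mpr ?_
  calc ∑ a, ((∑ i, g (N a i))/(d:ℝ))^2
      ≤ ∑ a, (∑ i, g (N a i)^2)/(d:ℝ) := Finset.sum_le_sum fun a _ => key a
    _ = (∑ a, ∑ i, g (N a i)^2)/(d:ℝ) := by rw [Finset.sum_div]
    _ = ∑ a, g a ^2 := by rw [h2]; field_simp


lemma edge_M (hd : 0 < d) (N : V → Fin d → V) (hsymm : SymmGraph N) (g : V → ℝ) :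
    edgeE N (fun a a' => g a * ((∑ i, g (N a' i)) / d))
      = expec (fun a => ((∑ i, g (N a i)) / d)^2) := by
  have hd' : (0:ℝ) < d := by exact_mod_cast hd
  have hn : (0:ℝ) < (Fintype.card V : ℝ) := ncard_pos
  have h := hsymm (fun a b => g a * ((∑ i, g (N b i)) / d))
  unfold edgeE expec
  rw [h]
  have : ∀ a : V, ∑ i, g (N a i) * ((∑ j, g (N a j)) / d)
      = (d:ℝ) * ((∑ i, g (N a i)) / d)^2 := by
    intro a
    rw [← Finset.sum_mul]
    field_simp
  rw [Finset.sum_congr rfl (fun a _ => this a), ← Finset.mul_sum]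
  field_simp

lemma sdev_M_le {lam : ℝ} (hd : 0 < d) (N : V → Fin d → V) (hlam : 0 ≤ lam)
    (hexp : IsExpander N lam) (hsymm : SymmGraph N) (g : V → ℝ) :
    sdev (fun a => (∑ i, g (N a i)) / d) ≤ lam * sdev g := by
  set Mg : V → ℝ := fun a => (∑ i, g (N a i)) / d with hMg
  have h1 := hexp g Mg
  have h2 : edgeE N (fun a a' => g a * Mg a') = expec (fun a => Mg a ^ 2) :=
    edge_M hd N hsymm g
  have h3 : expec Mg = expec g := expec_M hd N hsymm g
  have h4 : sdev Mg ^ 2 = expec (fun a => Mg a ^ 2) - (expec Mg)^2 := sdev_sq Mg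
  rw [h2, h3] at h1
  have h5 : sdev Mg ^ 2 ≤ lam * sdev g * sdev Mg := by
    rw [h4, h3]
    calc expec (fun a => Mg a ^ 2) - (expec g)^2
        ≤ |expec (fun a => Mg a ^ 2) - expec g * expec g| := by
          rw [← sq]; exact le_abs_self _
      _ ≤ lam * sdev g * sdev Mg := h1
  rcases eq_or_lt_of_le (sdev_nonneg' Mg) with h0 | h0
  · rw [← h0]; exact mul_nonneg hlam (sdev_nonneg' g)
  · have := le_of_mul_le_mul_right (by nlinarith : sdev Mg * sdev Mg ≤ (lam * sdev g) * sdev Mg) h0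
    exact this

section Steps
variable {V : Type*} [Fintype V] [Nonempty V] {d : ℕ} {lam : ℝ}
variable (N : V → Fin d → V) (f : V → Bool) (H : V → ℝ)

lemma expec_chi_sq : expec (fun a => (if f a then (-1:ℝ) else 1) ^ 2) = 1 := by
  have hn : (0:ℝ) < (Fintype.card V : ℝ) := ncard_pos
  have : (fun a : V => (if f a then (-1:ℝ) else 1) ^ 2) = fun _ => (1:ℝ) := by
    funext a; split <;> norm_num
  rw [this]
  unfold expec
  simp [Finset.card_univ]

lemma sdev_chi_le : sdev (fun a : V => if f a then (-1:ℝ) else 1) ≤ 1 := by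
  unfold sdev
  rw [expec_chi_sq]
  calc Real.sqrt (1 - (expec fun a : V => if f a then (-1:ℝ) else 1) ^ 2)
      ≤ Real.sqrt 1 := Real.sqrt_le_sqrt (by nlinarith [sq_nonneg (expec fun a : V => if f a then (-1:ℝ) else 1)])
    _ = 1 := Real.sqrt_one

lemma hHat_succ (m : ℕ) (a : V) :
    hHat N f H (m+2) a
      = (if f a then (-1:ℝ) else 1) * ((∑ i, hHat N f H (m+1) (N a i)) / d) := rfl

lemma hHat_sq (m : ℕ) (a : V) :
    hHat N f H (m+2) a ^ 2 = ((∑ i, hHat N f H (m+1) (N a i)) / d) ^ 2 := by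
  rw [hHat_succ]; split <;> ring

lemma expec_hHat_eq_edge (hd : 0 < d) (m : ℕ) :
    expec (hHat N f H (m+2))
      = edgeE N (fun a a' => (if f a then (-1:ℝ) else 1) * hHat N f H (m+1) a') := by
  have hd' : (0:ℝ) < d := by exact_mod_cast hd
  unfold expec edgeE
  have key : ∑ a, hHat N f H (m+2) a
      = (∑ a, ∑ i, (if f a then (-1:ℝ) else 1) * hHat N f H (m+1) (N a i)) / d := by
    rw [Finset.sum_div]
    refine Finset.sum_congr rfl fun a _ => ?_
    rw [hHat_succ, ← Finset.mul_sum]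
    ring
  rw [key, div_div, mul_comm (d:ℝ)]

lemma eps_step (hd : 0 < d) (hlam : 0 ≤ lam) (hexp : IsExpander N lam)
    (hbias : |expec (fun a => if f a then (-1 : ℝ) else 1)| ≤ Real.sqrt lam) (m : ℕ) :
    |expec (hHat N f H (m+2))|
      ≤ Real.sqrt lam * |expec (hHat N f H (m+1))| + lam * sdev (hHat N f H (m+1)) := by
  set χ : V → ℝ := fun a => if f a then (-1:ℝ) else 1 with hχ
  set g : V → ℝ := hHat N f H (m+1) with hg
  have h1 := hexp χ g
  have h2 : expec (hHat N f H (m+2)) = edgeE N (fun a a' => χ a * g a') :=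
    expec_hHat_eq_edge N f H hd m
  have h3 : |expec (hHat N f H (m+2))| ≤ |expec χ * expec g| + lam * sdev χ * sdev g := by
    rw [h2]
    calc |edgeE N fun a a' => χ a * g a'|
        = |(edgeE N (fun a a' => χ a * g a') - expec χ * expec g) + expec χ * expec g| := by
          rw [sub_add_cancel]
      _ ≤ |edgeE N (fun a a' => χ a * g a') - expec χ * expec g| + |expec χ * expec g| :=
          abs_add_le _ _
      _ ≤ lam * sdev χ * sdev g + |expec χ * expec g| := by gcongr
      _ = |expec χ * expec g| + lam * sdev χ * sdev g := by ring
  have h4 : |expec χ * expec g| ≤ Real.sqrt lam * |expec g| := by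
    rw [abs_mul]
    exact mul_le_mul_of_nonneg_right hbias (abs_nonneg _)
  have h5 : lam * sdev χ * sdev g ≤ lam * sdev g := by
    have h6 := sdev_chi_le f (V := V)
    rw [← hχ] at h6
    have h7 := mul_nonneg (mul_nonneg hlam (sdev_nonneg' g)) (sub_nonneg.2 h6)
    nlinarith
  linarith

lemma sdev_step (hd : 0 < d) (hlam : 0 ≤ lam) (hexp : IsExpander N lam)
    (hsymm : SymmGraph N) (m : ℕ) :
    sdev (hHat N f H (m+2))
      ≤ |expec (hHat N f H (m+1))| + lam * sdev (hHat N f H (m+1)) := by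
  set g : V → ℝ := hHat N f H (m+1) with hg
  set Mg : V → ℝ := fun a => (∑ i, g (N a i)) / d with hMgdef
  have hEsq : expec (fun a => hHat N f H (m+2) a ^ 2) = expec (fun a => Mg a ^ 2) := by
    unfold expec; congr 1; exact Finset.sum_congr rfl fun a _ => hHat_sq N f H m a
  have hsM : sdev Mg ≤ lam * sdev g := sdev_M_le hd N hlam hexp hsymm g
  have hEM : expec Mg = expec g := expec_M hd N hsymm g
  have hMsq : sdev Mg ^ 2 = expec (fun a => Mg a ^ 2) - (expec Mg)^2 := sdev_sq Mg
  have key : expec (fun a => hHat N f H (m+2) a ^ 2) - (expec (hHat N f H (m+2)))^2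
      ≤ (|expec g| + lam * sdev g)^2 := by
    rw [hEsq]
    have h1 : expec (fun a => Mg a ^ 2) = sdev Mg ^2 + (expec g)^2 := by
      rw [hMsq, hEM]; ring
    have h2 : sdev Mg ^ 2 ≤ (lam * sdev g)^2 := by
      nlinarith [sdev_nonneg' Mg, mul_nonneg hlam (sdev_nonneg' g)]
    have h3 : (0:ℝ) ≤ (expec (hHat N f H (m+2)))^2 := sq_nonneg _
    have h4 : (0:ℝ) ≤ |expec g| * (lam * sdev g) :=
      mul_nonneg (abs_nonneg _) (mul_nonneg hlam (sdev_nonneg' g))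
    nlinarith [sq_abs (expec g)]
  unfold sdev
  calc Real.sqrt (expec (fun a => hHat N f H (m+2) a ^ 2) - expec (hHat N f H (m+2)) ^ 2)
      ≤ Real.sqrt ((|expec g| + lam * sdev g)^2) := Real.sqrt_le_sqrt key
    _ = |expec g| + lam * sdev g :=
        Real.sqrt_sq (add_nonneg (abs_nonneg _) (mul_nonneg hlam (sdev_nonneg' g)))

lemma Esq_dec (hd : 0 < d) (hsymm : SymmGraph N) :
    ∀ m : ℕ, expec (fun a => hHat N f H (m+1) a ^ 2) ≤ expec (fun a => hHat N f H 1 a ^ 2) := by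
  intro m
  induction m with
  | zero => exact le_refl _
  | succ m ih =>
    have h1 : expec (fun a => hHat N f H (m+2) a ^ 2)
        = expec (fun a => ((∑ i, hHat N f H (m+1) (N a i)) / d)^2) := by
      unfold expec; congr 1; exact Finset.sum_congr rfl fun a _ => hHat_sq N f H m a
    rw [h1]
    exact (expec_sq_M_le hd N hsymm _).trans ih

lemma sqrt_mul_rpow (hlam : 0 ≤ lam) {y z : ℝ} (h : 1/2 + y = z) (hz : z ≠ 0) :
    Real.sqrt lam * lam ^ y = lam ^ z := by
  rw [Real.sqrt_eq_rpow, ← Real.rpow_add' hlam (by rw [h]; exact hz), h]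

lemma mul_rpow_self (hlam : 0 ≤ lam) {y z : ℝ} (h : 1 + y = z) (hz : z ≠ 0) :
    lam * lam ^ y = lam ^ z := by
  rw [← h, Real.rpow_add' hlam (by rw [h]; exact hz), Real.rpow_one]

lemma rpow_anti (hlam : 0 ≤ lam) (h1 : lam ≤ 1) {y z : ℝ} (hy : 0 ≤ y) (hyz : y ≤ z) :
    lam ^ z ≤ lam ^ y :=
  Real.rpow_le_rpow_of_exponent_ge' hlam h1 hy hyz

end Steps

end Stmt5Aux

open Stmt5Aux in
set_option maxHeartbeats 1000000 in
/-- Generalized walk bias bound (Claim 1.2). -/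
theorem stmt5 {V : Type*} [Fintype V] [Nonempty V] {d : ℕ} (hd : 0 < d)
    (N : V → Fin d → V) (lam : ℝ) (hlam : 0 ≤ lam)
    (hexp : IsExpander N lam) (hsymm : SymmGraph N)
    (f : V → Bool)
    (hbias : |expec (fun a => if f a then (-1 : ℝ) else 1)| ≤ Real.sqrt lam)
    (H : V → ℝ) :
    ∀ k : ℕ, 2 ≤ k →
      |expec (hHat N f H k)| ≤
          2 ^ (k - 2) * (lam ^ (((k : ℝ) - 1) / 2) * |expec (hHat N f H 1)|
            + lam ^ ((k : ℝ) / 2) * sdev (hHat N f H 1))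
        ∧ sdev (hHat N f H k) ≤
            2 ^ (k - 2) * (lam ^ (((k : ℝ) - 2) / 2) * |expec (hHat N f H 1)|
              + lam ^ (((k : ℝ) - 1) / 2) * sdev (hHat N f H 1)) := by
  intro k hk
  have hε : (0:ℝ) ≤ |expec (hHat N f H 1)| := abs_nonneg _
  have hσ : (0:ℝ) ≤ sdev (hHat N f H 1) := sdev_nonneg' _
  set ε := |expec (hHat N f H 1)| with hεdef
  set σ := sdev (hHat N f H 1) with hσdef
  rcases le_or_gt lam 1 with hl1 | hl1
  · -- λ ≤ 1 : induction on k
    induction k, hk using Nat.le_induction with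
    | base =>
      have E1 := eps_step N f H hd hlam hexp hbias 0
      have S1 := sdev_step N f H hd hlam hexp hsymm 0
      norm_num at E1 S1
      have hsq1 : Real.sqrt lam ≤ 1 := by
        calc Real.sqrt lam ≤ Real.sqrt 1 := Real.sqrt_le_sqrt hl1
          _ = 1 := Real.sqrt_one
      have hlsq : lam ≤ Real.sqrt lam := by
        nlinarith [Real.sq_sqrt hlam, Real.sqrt_nonneg lam]
      constructor
      · rw [show (((2:ℕ):ℝ) - 1)/2 = 1/2 by norm_num, show ((2:ℕ):ℝ)/2 = (1:ℝ) by norm_num,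
          Real.rpow_one, ← Real.sqrt_eq_rpow]
        norm_num
        linarith
      · rw [show (((2:ℕ):ℝ) - 2)/2 = (0:ℝ) by norm_num, show (((2:ℕ):ℝ) - 1)/2 = 1/2 by norm_num,
          Real.rpow_zero, ← Real.sqrt_eq_rpow]
        norm_num
        nlinarith
    | succ k hk IH =>
      obtain ⟨IH1, IH2⟩ := IH
      have hk2 : (2:ℝ) ≤ (k:ℝ) := by exact_mod_cast hk
      have E1 := eps_step N f H hd hlam hexp hbias (k-1)
      have S1 := sdev_step N f H hd hlam hexp hsymm (k-1)
      rw [show k-1+2 = k+1 from by omega, show k-1+1 = k from by omega] at E1 S1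
      set a : ℝ := ((k:ℝ) - 1)/2 with ha
      set b : ℝ := (k:ℝ)/2 with hb
      set c : ℝ := ((k:ℝ) - 2)/2 with hc
      set e : ℝ := ((k:ℝ) + 1)/2 with he
      have h1 : Real.sqrt lam * lam ^ a = lam ^ b :=
        sqrt_mul_rpow hlam (by rw [ha, hb]; ring) (by rw [hb]; positivity)
      have h2 : Real.sqrt lam * lam ^ b = lam ^ e :=
        sqrt_mul_rpow hlam (by rw [hb, he]; ring) (by rw [he]; positivity)
      have h3 : lam * lam ^ c = lam ^ b :=
        mul_rpow_self hlam (by rw [hc, hb]; ring) (by rw [hb]; positivity)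
      have h4 : lam * lam ^ a = lam ^ e :=
        mul_rpow_self hlam (by rw [ha, he]; ring) (by rw [he]; positivity)
      have hC : (0:ℝ) ≤ (2:ℝ)^(k-2) := by positivity
      have hnat : k + 1 - 2 = (k - 2) + 1 := by omega
      have hcast1 : ((↑(k+1) : ℝ) - 1)/2 = b := by push_cast; rw [hb]; ring
      have hcast2 : (↑(k+1) : ℝ)/2 = e := by push_cast; rw [he]
      have hcast3 : ((↑(k+1) : ℝ) - 2)/2 = a := by push_cast; rw [ha]; ring
      rw [hnat, pow_succ, hcast1, hcast2, hcast3]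
      constructor
      · calc |expec (hHat N f H (k+1))|
            ≤ Real.sqrt lam * |expec (hHat N f H k)| + lam * sdev (hHat N f H k) := E1
          _ ≤ Real.sqrt lam * ((2:ℝ)^(k-2) * (lam ^ a * ε + lam ^ b * σ))
              + lam * ((2:ℝ)^(k-2) * (lam ^ c * ε + lam ^ a * σ)) := by
              have u1 := mul_le_mul_of_nonneg_left IH1 (Real.sqrt_nonneg lam)
              have u2 := mul_le_mul_of_nonneg_left IH2 hlam
              linarith
          _ = (2:ℝ)^(k-2) * 2 * (lam ^ b * ε + lam ^ e * σ) := by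
              linear_combination ((2:ℝ)^(k-2) * ε) * h1 + ((2:ℝ)^(k-2) * σ) * h2
                + ((2:ℝ)^(k-2) * ε) * h3 + ((2:ℝ)^(k-2) * σ) * h4
      · have hba : lam ^ b ≤ lam ^ a := rpow_anti hlam hl1 (by rw [ha]; linarith) (by rw [ha, hb]; linarith)
        have heb : lam ^ e ≤ lam ^ b := rpow_anti hlam hl1 (by rw [hb]; linarith) (by rw [hb, he]; linarith)
        have step2 : lam * sdev (hHat N f H k) ≤ (2:ℝ)^(k-2) * (lam ^ b * ε + lam ^ e * σ) := by
          calc lam * sdev (hHat N f H k)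
              ≤ lam * ((2:ℝ)^(k-2) * (lam ^ c * ε + lam ^ a * σ)) := by
                have := mul_le_mul_of_nonneg_left IH2 hlam
                linarith
            _ = (2:ℝ)^(k-2) * ((lam * lam ^ c) * ε + (lam * lam ^ a) * σ) := by ring
            _ = (2:ℝ)^(k-2) * (lam ^ b * ε + lam ^ e * σ) := by rw [h3, h4]
        calc sdev (hHat N f H (k+1))
            ≤ |expec (hHat N f H k)| + lam * sdev (hHat N f H k) := S1
          _ ≤ (2:ℝ)^(k-2) * (lam ^ a * ε + lam ^ b * σ)
              + (2:ℝ)^(k-2) * (lam ^ b * ε + lam ^ e * σ) := add_le_add IH1 step2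
          _ ≤ (2:ℝ)^(k-2) * (lam ^ a * ε + lam ^ b * σ)
              + (2:ℝ)^(k-2) * (lam ^ a * ε + lam ^ b * σ) := by
              have t1 : lam ^ b * ε ≤ lam ^ a * ε := mul_le_mul_of_nonneg_right hba hε
              have t2 : lam ^ e * σ ≤ lam ^ b * σ := mul_le_mul_of_nonneg_right heb hσ
              have := mul_le_mul_of_nonneg_left (add_le_add t1 t2) hC
              linarith
          _ = (2:ℝ)^(k-2) * 2 * (lam ^ a * ε + lam ^ b * σ) := by ring
  · -- λ > 1 : trivial bounds
    have hk2 : (2:ℝ) ≤ (k:ℝ) := by exact_mod_cast hk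
    have hEk : expec (fun x => hHat N f H k x ^ 2) ≤ expec (fun x => hHat N f H 1 x ^ 2) := by
      have h := Esq_dec N f H hd hsymm (k-1)
      rwa [show k-1+1 = k from by omega] at h
    have hsq1 : expec (fun x => hHat N f H 1 x ^ 2) ≤ (ε + σ)^2 := by
      have h := sdev_sq (hHat N f H 1)
      rw [← hσdef] at h
      nlinarith [sq_abs (expec (hHat N f H 1)), mul_nonneg hε hσ]
    have hub : Real.sqrt (expec (fun x => hHat N f H k x ^ 2)) ≤ ε + σ := by
      calc Real.sqrt (expec (fun x => hHat N f H k x ^ 2))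
          ≤ Real.sqrt ((ε + σ)^2) := Real.sqrt_le_sqrt (hEk.trans hsq1)
        _ = ε + σ := Real.sqrt_sq (by linarith)
    have hub1 : |expec (hHat N f H k)| ≤ ε + σ := (abs_expec_le_sqrt _).trans hub
    have hub2 : sdev (hHat N f H k) ≤ ε + σ := (sdev_le_sqrt _).trans hub
    have hCk : (1:ℝ) ≤ (2:ℝ)^(k-2) := one_le_pow₀ (by norm_num)
    have hr : ∀ y : ℝ, 0 ≤ y → (1:ℝ) ≤ lam ^ y := fun y hy => Real.one_le_rpow hl1.le hy
    have hr1 := hr (((k:ℝ) - 1)/2) (by linarith)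
    have hr2 := hr ((k:ℝ)/2) (by linarith)
    have hr3 := hr (((k:ℝ) - 2)/2) (by linarith)
    constructor
    · calc |expec (hHat N f H k)| ≤ ε + σ := hub1
        _ ≤ 1 * (1 * ε + 1 * σ) := by linarith
        _ ≤ 2 ^ (k - 2) * (lam ^ (((k : ℝ) - 1) / 2) * ε + lam ^ ((k : ℝ) / 2) * σ) := by
            have t1 : 1 * ε ≤ lam ^ (((k : ℝ) - 1) / 2) * ε := mul_le_mul_of_nonneg_right hr1 hε
            have t2 : 1 * σ ≤ lam ^ ((k : ℝ) / 2) * σ := mul_le_mul_of_nonneg_right hr2 hσ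
            have hnn : (0:ℝ) ≤ lam ^ (((k : ℝ) - 1) / 2) * ε + lam ^ ((k : ℝ) / 2) * σ := by
              nlinarith
            nlinarith
    · calc sdev (hHat N f H k) ≤ ε + σ := hub2
        _ ≤ 1 * (1 * ε + 1 * σ) := by linarith
        _ ≤ 2 ^ (k - 2) * (lam ^ (((k : ℝ) - 2) / 2) * ε + lam ^ (((k : ℝ) - 1) / 2) * σ) := by
            have t1 : 1 * ε ≤ lam ^ (((k : ℝ) - 2) / 2) * ε := mul_le_mul_of_nonneg_right hr3 hε
            have t2 : 1 * σ ≤ lam ^ (((k : ℝ) - 1) / 2) * σ := mul_le_mul_of_nonneg_right hr1 hσ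
            have hnn : (0:ℝ) ≤ lam ^ (((k : ℝ) - 2) / 2) * ε + lam ^ (((k : ℝ) - 1) / 2) * σ := by
              nlinarith
            nlinarith
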